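/- Define the finite-difference form ∂_M(e_M^m, e_M^n) = 2M(δ_{m,n+1} − δ_{m,n−1}) (indices mod M) on ℂ^M. Under the embedding I^{(2)}_{M→2M} e_M^m = (e_{2M}^{2m} + e_{2M}^{2m+1})/√2, this family is weakly cylindrically consistent: ∂_{2M}(I^{(2)}_{M→2M} e_M^m, I^{(2)}_{M→2M} e_M^n) = ∂_M(e_M^m, e_M^n) for all m,n ∈ {0,…,M−1}. -/

import Mathlib

/-- The orthonormal basis vector e_M^m = √M δ^m of ℂ^M. -/
noncomputable def eVec (M : ℕ) (m : ZMod M) : ZMod M → ℂ :=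
  fun a => if a = m then (Real.sqrt M : ℂ) else 0

/-- The embedding I^{(2)}_{M→2M}, determined on the ONB by
e_M^m ↦ (e_{2M}^{2m} + e_{2M}^{2m+1})/√2; on functions: (I f)(n) = f(⌊n/2⌋). -/
def embed2 (M : ℕ) (f : ZMod M → ℂ) : ZMod (2 * M) → ℂ :=
  fun n => f ((n.val / 2 : ℕ) : ZMod M)

/-- The finite-difference sesquilinear form ∂_N(f,g) = (1/N)∑ₐ conj(f_a)·2N(g_{a+1} − g_{a−1})
on ℂ^N with periodic boundary conditions (indices mod N). -/
noncomputable def dform (N : ℕ) [NeZero N] (f g : ZMod N → ℂ) : ℂ :=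
  (1 / (N : ℂ)) * ∑ a : ZMod N,
    (starRingEnd ℂ) (f a) * (2 * (N : ℂ) * (g (a + 1) - g (a - 1)))

/-!
The embedding doubles every sample: `(I g)(2a) = (I g)(2a+1) = g(a)`. Hence on the pair of sites
`2a, 2a+1` the central differences of `I g` are `g(a) - g(a-1)` and `g(a+1) - g(a)`, which add up to
the central difference `g(a+1) - g(a-1)` on the coarse lattice, while the normalisations `1/N` and
`2N` cancel. So `∂_{2M}(I f, I g) = ∂_M(f, g)` for all `f, g`, in particular for basis vectors.
-/

open Finset

theorem ZMod.sum_eq_sum_range {α : Type*} [AddCommMonoid α] (N : ℕ) [NeZero N]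
    (F : ZMod N → α) : ∑ a, F a = ∑ j ∈ range N, F j :=
  sum_nbij' ZMod.val Nat.cast (by simp [ZMod.val_lt]) (by simp) (by simp)
    (fun j hj => by simp [ZMod.val_cast_of_lt (mem_range.mp hj)]) (by simp)

theorem Finset.sum_range_two_mul {α : Type*} [AddCommMonoid α] (f : ℕ → α) (n : ℕ) :
    ∑ j ∈ range (2 * n), f j = ∑ i ∈ range n, (f (2 * i) + f (2 * i + 1)) := by
  induction n with
  | zero => simp
  | succ n ih => rw [mul_add, mul_one, sum_range_succ, sum_range_succ, sum_range_succ, ih, add_assoc]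

theorem Int.emod_two_mul_ediv_two (j : ℤ) {M : ℤ} (hM : 0 < M) : j % (2 * M) / 2 = j / 2 % M := by
  have hj := Int.emod_add_mul_ediv j (2 * M)
  have hr₀ := Int.emod_nonneg j (by omega : 2 * M ≠ 0)
  have hr₁ := Int.emod_lt_of_pos j (by omega : 0 < 2 * M)
  set r := j % (2 * M)
  set q := j / (2 * M)
  have hq : 2 * M * q = 2 * (M * q) := by ring
  rw [show j / 2 = r / 2 + M * q by omega, Int.add_mul_emod_self_left,
    Int.emod_eq_of_lt (by omega) (by omega)]

theorem dform_eq_two_mul_sum (N : ℕ) [NeZero N] (f g : ZMod N → ℂ) :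
    dform N f g = 2 * ∑ a, starRingEnd ℂ (f a) * (g (a + 1) - g (a - 1)) := by
  have hN : (N : ℂ) ≠ 0 := NeZero.ne _
  rw [dform, mul_sum, mul_sum]
  refine sum_congr rfl fun a _ => ?_
  field_simp

/-- `j / 2` is `Int.ediv`, which rounds down, so this also covers negative `j`. -/
theorem embed2_intCast (M : ℕ) [NeZero M] (f : ZMod M → ℂ) (j : ℤ) :
    embed2 M f j = f ((j / 2 : ℤ) : ZMod M) := by
  unfold embed2
  congr 1
  rw [← Int.cast_natCast, ZMod.intCast_eq_intCast_iff', Int.natCast_ediv, ZMod.val_intCast]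
  push_cast
  rw [Int.emod_two_mul_ediv_two _ (by exact_mod_cast NeZero.pos M), Int.emod_emod_of_dvd _ dvd_rfl]

theorem embed2_two_mul_add (M : ℕ) [NeZero M] (f : ZMod M → ℂ) (i : ℕ) (k : ℤ) :
    embed2 M f (2 * i + k) = f (i + (k / 2 : ℤ)) := by
  rw [show 2 * (i : ZMod (2 * M)) + k = ((2 * i + k : ℤ) : ZMod (2 * M)) by push_cast; ring,
    embed2_intCast, show (2 * i + k) / 2 = i + k / 2 by omega]
  push_cast
  rfl

theorem dform_embed2 (M : ℕ) [NeZero M] (f g : ZMod M → ℂ) :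
    dform (2 * M) (embed2 M f) (embed2 M g) = dform M f g := by
  rw [dform_eq_two_mul_sum, dform_eq_two_mul_sum, ZMod.sum_eq_sum_range, ZMod.sum_eq_sum_range,
    sum_range_two_mul]
  congr 1
  refine sum_congr rfl fun i _ => ?_
  push_cast
  have even (h : ZMod M → ℂ) : embed2 M h (2 * i) = h i := by
    simpa using embed2_two_mul_add M h i 0
  have odd (h : ZMod M → ℂ) : embed2 M h (2 * i + 1) = h i := by
    simpa using embed2_two_mul_add M h i 1
  have next : embed2 M g (2 * i + 1 + 1) = g (i + 1) := by
    simpa [add_assoc, one_add_one_eq_two] using embed2_two_mul_add M g i 2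
  have prev : embed2 M g (2 * i - 1) = g (i - 1) := by
    simpa [sub_eq_add_neg] using embed2_two_mul_add M g i (-1)
  rw [add_sub_cancel_right, even, even, odd, odd, next, prev]
  ring

theorem stmt15_general (M : ℕ) [NeZero M] :
    ∀ m n : ZMod M,
      dform (2 * M) (embed2 M (eVec M m)) (embed2 M (eVec M n)) =
        dform M (eVec M m) (eVec M n) :=
  fun m n => dform_embed2 M (eVec M m) (eVec M n)

/-- Under the embedding I^{(2)}_{M→2M}, the finite-difference
momentum forms are weakly cylindrically consistent:
∂_{2M}(I^{(2)}e_M^m, I^{(2)}e_M^n) = ∂_M(e_M^m, e_M^n) for all m, n. -/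
theorem stmt15 (M : ℕ) [NeZero M] (L : ℕ) (hM : M = 2 ^ L) (h2 : 2 ≤ M) :
    ∀ m n : ZMod M,
      dform (2 * M) (embed2 M (eVec M m)) (embed2 M (eVec M n)) =
        dform M (eVec M m) (eVec M n) :=
  stmt15_general M
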